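/- arXiv:1605.07939 — 2 statements merged into one kernel-verified Lean document; each statement's English description precedes it below -/
import Mathlib

section
/- Let f : ℝ^d → ℝ ∪ {+∞} be a closed proper convex function, μ a finite positive measure, and suppose the integral functional I_f(x) = ∫ f(x(ξ)) dμ(ξ) is finite at some essentially bounded measurable x̄ with an L¹ bound: there exist r > 0 and β ∈ L¹(μ) with f(x̄(ξ) + x') ≤ β(ξ) for all |x'| ≤ r. If x is essentially bounded measurable with values in int L^∞(dom f)-sense, i.e. dist(x(ξ), ℝ^d \ dom f) ≥ r μ-a.e. for some r > 0, and f(x(·)) has an integrable upper bound, then I_f is norm-continuous at x on L^∞(μ; ℝ^d). -/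
open MeasureTheory Set
open scoped ENNReal

/-- Positive part of an extended real, as an `ℝ≥0∞`. -/
noncomputable def epos (e : EReal) : ℝ≥0∞ := if e = ⊤ then ⊤ else ENNReal.ofReal e.toReal

/-- The integral of an `EReal`-valued function, with the convention that it is `+∞`
unless the positive part is integrable. -/
noncomputable def eIntegral {α : Type*} [MeasurableSpace α] (μ : Measure α)
    (g : α → EReal) : EReal :=
  if (∫⁻ a, epos (g a) ∂μ) = ⊤ then ⊤
  else ((∫⁻ a, epos (g a) ∂μ : ℝ≥0∞) : EReal) - ((∫⁻ a, epos (-(g a)) ∂μ : ℝ≥0∞) : EReal)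

/-! In finite dimensions a convex function is continuous, hence bounded and uniformly continuous,
on every compact subset of the interior of its domain. For `u` within `r / 2` of `x` in `L^∞`,
the values `u ξ` lie a.e. in one such compact set `K`: the points of norm at most `‖x‖ + r / 2`
at distance at least `r / 2` from the complement of the domain. There `I_f` is the integral of a
bounded real function, and uniform continuity of `f` on `K` turns `‖u - v‖_∞ < δ` into
`|I_f u - I_f v| < ε`. -/

section eIntegral

variable {α : Type*} [MeasurableSpace α] {μ : Measure α}

lemma epos_coe (c : ℝ) : epos (c : EReal) = ENNReal.ofReal c := by
  simp [epos]

lemma eIntegral_eq_integral {h : α → EReal} {φ : α → ℝ} (hφ : Integrable φ μ)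
    (hae : ∀ᵐ a ∂μ, h a = (φ a : EReal)) :
    eIntegral μ h = ((∫ a, φ a ∂μ : ℝ) : EReal) := by
  have hpos : (∫⁻ a, epos (h a) ∂μ) = ∫⁻ a, ENNReal.ofReal (φ a) ∂μ :=
    lintegral_congr_ae (hae.mono fun a ha => by simp only [ha, epos_coe])
  have hneg : (∫⁻ a, epos (-h a) ∂μ) = ∫⁻ a, ENNReal.ofReal (-φ a) ∂μ :=
    lintegral_congr_ae (hae.mono fun a ha => by simp only [ha, ← EReal.coe_neg, epos_coe])
  have hpos_fin : ∫⁻ a, ENNReal.ofReal (φ a) ∂μ ≠ ∞ := hφ.lintegral_lt_top.ne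
  have hneg_fin : ∫⁻ a, ENNReal.ofReal (-φ a) ∂μ ≠ ∞ := hφ.neg.lintegral_lt_top.ne
  rw [eIntegral, hpos, hneg, if_neg hpos_fin,
    integral_eq_lintegral_pos_part_sub_lintegral_neg_part hφ,
    ← EReal.coe_ennreal_toReal hpos_fin, ← EReal.coe_ennreal_toReal hneg_fin, ← EReal.coe_sub]

end eIntegral

section ConvexEReal

variable {E : Type*} [AddCommGroup E] [Module ℝ E] {f : E → EReal}

lemma EReal.coe_mul_add_coe_mul_eq_coe {p q : EReal} (hp : p ≠ ⊤) (hp' : p ≠ ⊥) (hq : q ≠ ⊤)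
    (hq' : q ≠ ⊥) (a b : ℝ) :
    (a : EReal) * p + (b : EReal) * q = ((a * p.toReal + b * q.toReal : ℝ) : EReal) := by
  rw [← EReal.coe_toReal hp hp', ← EReal.coe_toReal hq hq']
  norm_cast

lemma convexOn_toReal_setOf_ne_top
    (hcvx : ∀ x y : E, ∀ a b : ℝ, 0 ≤ a → 0 ≤ b → a + b = 1 →
      f (a • x + b • y) ≤ (a : EReal) * f x + (b : EReal) * f y)
    (hbot : ∀ x, f x ≠ ⊥) :
    ConvexOn ℝ {v | f v ≠ ⊤} (fun v => (f v).toReal) := by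
  have hcomb : ∀ ⦃v⦄, f v ≠ ⊤ → ∀ ⦃w⦄, f w ≠ ⊤ → ∀ ⦃a b : ℝ⦄, 0 ≤ a → 0 ≤ b → a + b = 1 →
      f (a • v + b • w) ≤ ((a * (f v).toReal + b * (f w).toReal : ℝ) : EReal) :=
    fun v hv w hw a b ha hb hab =>
      EReal.coe_mul_add_coe_mul_eq_coe hv (hbot v) hw (hbot w) a b ▸ hcvx v w a b ha hb hab
  have hconv : Convex ℝ {v | f v ≠ ⊤} := fun v hv w hw a b ha hb hab =>
    ((hcomb hv hw ha hb hab).trans_lt (EReal.coe_lt_top _)).ne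
  refine ⟨hconv, fun v hv w hw a b ha hb hab => ?_⟩
  simpa only [EReal.toReal_coe, smul_eq_mul] using
    EReal.toReal_le_toReal (hcomb hv hw ha hb hab) (hbot _) (EReal.coe_ne_top _)

end ConvexEReal

lemma compl_thickening_compl_subset_interior {X : Type*} [PseudoMetricSpace X] {δ : ℝ}
    (hδ : 0 < δ) (S : Set X) : (Metric.thickening δ Sᶜ)ᶜ ⊆ interior S := by
  rw [← compl_compl (interior S), ← closure_compl]
  exact compl_subset_compl.mpr (Metric.closure_subset_thickening hδ _)

namespace MeasureTheory.Lp

variable {α E : Type*} [MeasurableSpace α] {μ : Measure α} [NormedAddCommGroup E]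

lemma ae_norm_le_norm_top (u : Lp E ∞ μ) : ∀ᵐ ξ ∂μ, ‖u ξ‖ ≤ ‖u‖ := by
  simpa only [Lp.norm_def, toReal_eLpNorm (Lp.aestronglyMeasurable u)]
    using ae_le_lpNorm_exponent_top (Lp.memLp u)

lemma ae_dist_le_dist_top (u v : Lp E ∞ μ) : ∀ᵐ ξ ∂μ, dist (u ξ) (v ξ) ≤ dist u v := by
  filter_upwards [ae_norm_le_norm_top (u - v), Lp.coeFn_sub u v] with ξ hle hsub
  rwa [_root_.dist_eq_norm, _root_.dist_eq_norm, ← Pi.sub_apply, ← hsub]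

lemma ae_mem_closedBall_diff_thickening {S : Set E} {r : ℝ} {v : Lp E ∞ μ}
    (hv : ∀ᵐ ξ ∂μ, ∀ y, dist y (v ξ) < r → y ∈ S) {u : Lp E ∞ μ} (huv : dist u v < r / 2) :
    ∀ᵐ ξ ∂μ, u ξ ∈ Metric.closedBall 0 (‖v‖ + r / 2) \ Metric.thickening (r / 2) Sᶜ := by
  filter_upwards [hv, ae_dist_le_dist_top u v, ae_norm_le_norm_top v] with ξ hS hd hn
  refine ⟨?_, ?_⟩
  · rw [mem_closedBall_zero_iff]
    linarith [norm_le_norm_add_norm_sub' (u ξ) (v ξ), _root_.dist_eq_norm (u ξ) (v ξ)]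
  · rw [Metric.mem_thickening_iff]
    rintro ⟨z, hz, hzu⟩
    exact hz (hS z (by linarith [dist_triangle z (u ξ) (v ξ), dist_comm z (u ξ)]))

end MeasureTheory.Lp

section IntegralComp

variable {α E : Type*} [MeasurableSpace α] {μ : Measure α} [IsFiniteMeasure μ]
  [NormedAddCommGroup E] [MeasurableSpace E] {g : E → ℝ} {K : Set E}

lemma integrable_comp_of_ae_mem_isCompact (hg : Measurable g) (hK : IsCompact K)
    (hgK : ContinuousOn g K) {u : α → E} (hu : AEMeasurable u μ) (huK : ∀ᵐ ξ ∂μ, u ξ ∈ K) :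
    Integrable (fun ξ => g (u ξ)) μ := by
  obtain ⟨C, hC⟩ := hK.exists_bound_of_continuousOn hgK
  exact Integrable.of_bound (hg.comp_aemeasurable hu).aestronglyMeasurable C
    (huK.mono fun ξ hξ => hC _ hξ)

lemma continuousOn_integral_comp_Linfty [BorelSpace E] [SecondCountableTopology E]
    (hg : Measurable g) (hK : IsCompact K) (hgK : ContinuousOn g K) :
    ContinuousOn (fun u : Lp E ∞ μ => ∫ ξ, g (u ξ) ∂μ) {u | ∀ᵐ ξ ∂μ, u ξ ∈ K} := by
  have hint : ∀ u : Lp E ∞ μ, (∀ᵐ ξ ∂μ, u ξ ∈ K) → Integrable (fun ξ => g (u ξ)) μ :=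
    fun u => integrable_comp_of_ae_mem_isCompact hg hK hgK (Lp.aestronglyMeasurable u).aemeasurable
  rw [Metric.continuousOn_iff]
  intro v hv ε hε
  set m := μ.real univ
  have hη : 0 < ε / (m + 1) := by positivity
  obtain ⟨δ, hδ, hgδ⟩ :=
    Metric.uniformContinuousOn_iff.mp (hK.uniformContinuousOn_of_continuous hgK) _ hη
  refine ⟨δ, hδ, fun u hu huv => ?_⟩
  have hclose : ∀ᵐ ξ ∂μ, ‖g (u ξ) - g (v ξ)‖ ≤ ε / (m + 1) := by
    filter_upwards [hu, hv, Lp.ae_dist_le_dist_top u v] with ξ huξ hvξ hd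
    exact (hgδ _ huξ _ hvξ (hd.trans_lt huv)).le
  rw [dist_eq_norm, ← integral_sub (hint u hu) (hint v hv)]
  calc ‖∫ ξ, g (u ξ) - g (v ξ) ∂μ‖ ≤ ε / (m + 1) * m := norm_integral_le_of_norm_le_const hclose
    _ < ε := by
      rw [div_mul_eq_mul_div, div_lt_iff₀ (by positivity)]
      nlinarith

end IntegralComp

theorem integral_functional_continuous_at_general
    {α : Type*} [MeasurableSpace α] (μ : Measure α) [IsFiniteMeasure μ]
    {d : ℕ} (f : (Fin d → ℝ) → EReal)
    -- f is closed proper convex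
    (hlsc : LowerSemicontinuous f)
    (hcvx : ∀ x y : Fin d → ℝ, ∀ a b : ℝ, 0 ≤ a → 0 ≤ b → a + b = 1 →
      f (a • x + b • y) ≤ (a : EReal) * f x + (b : EReal) * f y)
    (hproper₁ : ∀ x, f x ≠ ⊥)
    -- x is essentially bounded with dist(x(ξ), ℝ^d \ dom f) ≥ r a.e. ...
    (x : α → Fin d → ℝ) (hx : MemLp x ⊤ μ)
    (r : ℝ) (hr : 0 < r)
    (hint : ∀ᵐ ξ ∂μ, ∀ y : Fin d → ℝ, dist y (x ξ) < r → f y ≠ ⊤) :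
    ContinuousAt (fun u : Lp (Fin d → ℝ) ⊤ μ => eIntegral μ (fun ξ => f (u ξ)))
      (hx.toLp x) := by
  set S := {v | f v ≠ ⊤}
  set x₀ := hx.toLp x
  set K := Metric.closedBall 0 (‖x₀‖ + r / 2) \ Metric.thickening (r / 2) Sᶜ
  have hKS : K ⊆ interior S := fun _ hv =>
    compl_thickening_compl_subset_interior (half_pos hr) S hv.2
  have hgK : ContinuousOn (fun v => (f v).toReal) K :=
    ((convexOn_toReal_setOf_ne_top hcvx hproper₁).continuousOn_interior).mono hKS
  have hint₀ : ∀ᵐ ξ ∂μ, ∀ y, dist y (x₀ ξ) < r → y ∈ S := by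
    filter_upwards [hint, hx.coeFn_toLp] with ξ hξ hx₀ξ
    rwa [hx₀ξ]
  have hnear : Metric.ball x₀ (r / 2) ⊆ {u | ∀ᵐ ξ ∂μ, u ξ ∈ K} := fun u hu =>
    Lp.ae_mem_closedBall_diff_thickening hint₀ hu
  have hgm : Measurable fun v => (f v).toReal := measurable_ereal_toReal.comp hlsc.measurable
  have hK : IsCompact K := (isCompact_closedBall _ _).diff Metric.isOpen_thickening
  have hball : Metric.ball x₀ (r / 2) ∈ nhds x₀ := Metric.ball_mem_nhds x₀ (half_pos hr)
  have hG : ContinuousAt (fun u : Lp (Fin d → ℝ) ⊤ μ => ∫ ξ, (f (u ξ)).toReal ∂μ) x₀ :=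
    (continuousOn_integral_comp_Linfty hgm hK hgK).continuousAt (Filter.mem_of_superset hball hnear)
  refine (continuous_coe_real_ereal.continuousAt.comp hG).congr ?_
  filter_upwards [hball] with u hu
  refine (eIntegral_eq_integral ?_ ?_).symm
  · exact integrable_comp_of_ae_mem_isCompact hgm hK hgK (Lp.aestronglyMeasurable u).aemeasurable
      (hnear hu)
  · filter_upwards [hnear hu] with ξ hξ
    exact (EReal.coe_toReal (interior_subset (hKS hξ)) (hproper₁ _)).symm

/-- Norm-continuity of the integral functional `I_f` on `L^∞(μ; ℝ^d)` at points lying in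
the `L^∞`-interior of the domain with an integrable upper bound. -/
theorem integral_functional_continuous_at
    {α : Type*} [MeasurableSpace α] (μ : Measure α) [IsFiniteMeasure μ]
    {d : ℕ} (f : (Fin d → ℝ) → EReal)
    -- f is closed proper convex
    (hlsc : LowerSemicontinuous f)
    (hcvx : ∀ x y : Fin d → ℝ, ∀ a b : ℝ, 0 ≤ a → 0 ≤ b → a + b = 1 →
      f (a • x + b • y) ≤ (a : EReal) * f x + (b : EReal) * f y)
    (hproper₁ : ∀ x, f x ≠ ⊥) (hproper₂ : ∃ x, f x ≠ ⊤)
    -- I_f is finite at some essentially bounded x̄ with an L¹ upper bound around x̄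
    (xb : α → Fin d → ℝ) (hxb : MemLp xb ⊤ μ)
    (hfin : ∃ c : ℝ, eIntegral μ (fun ξ => f (xb ξ)) = (c : EReal))
    (rb : ℝ) (hrb : 0 < rb) (β : α → ℝ) (hβ : Integrable β μ)
    (hbound : ∀ᵐ ξ ∂μ, ∀ x' : Fin d → ℝ, ‖x'‖ ≤ rb → f (xb ξ + x') ≤ (β ξ : EReal))
    -- x is essentially bounded with dist(x(ξ), ℝ^d \ dom f) ≥ r a.e. ...
    (x : α → Fin d → ℝ) (hx : MemLp x ⊤ μ)
    (r : ℝ) (hr : 0 < r)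
    (hint : ∀ᵐ ξ ∂μ, ∀ y : Fin d → ℝ, dist y (x ξ) < r → f y ≠ ⊤)
    -- ... and f(x(·)) has an integrable upper bound
    (γ : α → ℝ) (hγ : Integrable γ μ)
    (hxbound : ∀ᵐ ξ ∂μ, f (x ξ) ≤ (γ ξ : EReal)) :
    ContinuousAt (fun u : Lp (Fin d → ℝ) ⊤ μ => eIntegral μ (fun ξ => f (u ξ)))
      (hx.toLp x) :=
  integral_functional_continuous_at_general μ f hlsc hcvx hproper₁ x hx r hr hint
end

section
/- Let g be a closed proper convex function on the dual U of a Banach space Y (with weak* topology). Then the recession function of g equals the indicator of {0} (i.e. g^∞ = δ_{{0}}, meaning g is coercive) if and only if the domain of g* is dense in Y. -/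
/-!
Hahn–Banach in `U × ℝ`, whose continuous functionals are `(w, s) ↦ w y + k s` because the
weak* dual of `U` is `Y`, separates a point strictly below the epigraph of `g` from it. A
non-vertical separating hyperplane is an affine minorant `w ↦ w y - K` of `g` with `g* y ≤ K`;
a vertical one is tilted into such a minorant by adding it with a large weight to any affine
minorant. Hence every point below the epigraph lies below an affine minorant coming from
`dom g*`, which makes `g^∞` the support function of `dom g*`. Finally, by Hahn–Banach in `Y`, a
nonempty convex set is dense exactly when its support function is `+∞` at every nonzero
functional.
-/

/-- The recession function of `g` based at `u₀`. -/
noncomputable def recFun {E : Type*} [AddCommMonoid E] [SMul ℝ E]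
    (g : E → EReal) (u₀ u : E) : EReal :=
  ⨆ α : {a : ℝ // 0 < a}, (g (u₀ + (α : ℝ) • u) - g u₀) * (((α : ℝ)⁻¹ : ℝ) : EReal)

/-- The conjugate of a function on the weak* dual of `Y`, as a function on `Y`. -/
noncomputable def conjDual {Y : Type*} [NormedAddCommGroup Y] [NormedSpace ℝ Y]
    (g : WeakDual ℝ Y → EReal) (y : Y) : EReal :=
  ⨆ u : WeakDual ℝ Y, ((u y : ℝ) : EReal) - g u

noncomputable def supportFun {E : Type*} [TopologicalSpace E] [AddCommGroup E] [Module ℝ E]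
    (D : Set E) (f : StrongDual ℝ E) : EReal :=
  ⨆ y ∈ D, ((f y : ℝ) : EReal)

section SupportFunction

variable {E : Type*} [TopologicalSpace E] [AddCommGroup E] [Module ℝ E] {D : Set E}

theorem Dense.supportFun_eq_top (hD : Dense D) {f : StrongDual ℝ E} (hf : f ≠ 0) :
    supportFun D f = ⊤ := by
  obtain ⟨z, hz⟩ : ∃ z, f z ≠ 0 := by
    by_contra! h
    exact hf (ContinuousLinearMap.ext h)
  refine (EReal.eq_top_iff_forall_lt _).2 fun M => ?_
  have hopen : IsOpen {y | M < f y} := isOpen_lt continuous_const f.continuous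
  have hne : {y | M < f y}.Nonempty :=
    ⟨((M + 1) / f z) • z, by simp [div_mul_cancel₀ _ hz]⟩
  obtain ⟨y, hyD, hy⟩ := hD.exists_mem_open hopen hne
  exact (EReal.coe_lt_coe_iff.2 hy).trans_le
    (le_iSup₂ (f := fun y _ => ((f y : ℝ) : EReal)) y hyD)

theorem Convex.dense_iff_supportFun_eq_top [IsTopologicalAddGroup E] [ContinuousSMul ℝ E]
    [LocallyConvexSpace ℝ E] (hconv : Convex ℝ D)
    (hne : D.Nonempty) : Dense D ↔ ∀ f : StrongDual ℝ E, f ≠ 0 → supportFun D f = ⊤ := by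
  refine ⟨fun hD f hf => hD.supportFun_eq_top hf, fun h => ?_⟩
  by_contra hD
  obtain ⟨y₀, hy₀⟩ : ∃ y₀, y₀ ∉ closure D := by
    simpa [dense_iff_closure_eq, Set.eq_univ_iff_forall] using hD
  obtain ⟨f, ρ, hfD, hfy₀⟩ :=
    geometric_hahn_banach_closed_point hconv.closure isClosed_closure hy₀
  obtain ⟨y, hy⟩ := hne
  have hf : f ≠ 0 := by
    rintro rfl
    simp only [zero_apply] at hfD hfy₀
    linarith [hfD y (subset_closure hy)]
  have hbdd : supportFun D f ≤ ρ :=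
    iSup₂_le fun y hy => EReal.coe_le_coe_iff.2 (hfD y (subset_closure hy)).le
  exact (EReal.coe_lt_top ρ).not_ge (h f hf ▸ hbdd)

end SupportFunction

section Epigraph

variable {E : Type*} {g : E → EReal}

def epigraph (g : E → EReal) : Set (E × ℝ) := {p | g p.1 ≤ p.2}

theorem isClosed_epigraph [TopologicalSpace E] (hlsc : LowerSemicontinuous g) :
    IsClosed (epigraph g) :=
  hlsc.isClosed_epigraph.preimage
    (continuous_fst.prodMk (continuous_coe_real_ereal.comp continuous_snd))

theorem convex_epigraph [AddCommGroup E] [Module ℝ E]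
    (hcvx : ∀ x y : E, ∀ a b : ℝ, 0 ≤ a → 0 ≤ b → a + b = 1 →
      g (a • x + b • y) ≤ (a : EReal) * g x + (b : EReal) * g y) :
    Convex ℝ (epigraph g) := by
  rintro ⟨x, s⟩ hx ⟨y, t⟩ hy a b ha hb hab
  calc g (a • x + b • y) ≤ (a : EReal) * g x + (b : EReal) * g y := hcvx x y a b ha hb hab
    _ ≤ (a : EReal) * s + (b : EReal) * t :=
      add_le_add (mul_le_mul_of_nonneg_left hx (EReal.coe_nonneg.2 ha))
        (mul_le_mul_of_nonneg_left hy (EReal.coe_nonneg.2 hb))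
    _ = ((a * s + b * t : ℝ) : EReal) := by norm_cast

end Epigraph

theorem recFun_le_coe_iff {E : Type*} [AddCommMonoid E] [SMul ℝ E] {g : E → EReal} {u₀ u : E}
    {G : ℝ} (hG : g u₀ = G) {r : ℝ} :
    recFun g u₀ u ≤ r ↔ ∀ α : ℝ, 0 < α → g (u₀ + α • u) ≤ ((G + α * r : ℝ) : EReal) := by
  simp only [recFun, iSup_le_iff, Subtype.forall, hG]
  refine forall₂_congr fun α hα => ?_
  rw [EReal.coe_inv, ← div_eq_mul_inv, EReal.div_le_iff_le_mul (EReal.coe_pos.2 hα)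
    (EReal.coe_ne_top α), EReal.sub_le_iff_le_add (.inl (EReal.coe_ne_bot _))
    (.inl (EReal.coe_ne_top _)), ← EReal.coe_mul, ← EReal.coe_add, add_comm (α * r)]

theorem recFun_zero {E : Type*} [AddCommMonoid E] [Module ℝ E] {g : E → EReal} {u₀ : E}
    {G : ℝ} (hG : g u₀ = G) : recFun g u₀ 0 = 0 := by
  simp [recFun, hG]

section WeakDual

variable {E : Type*} [AddCommGroup E] [TopologicalSpace E] [Module ℝ E]

instance : LocallyConvexSpace ℝ (WeakDual ℝ E) :=
  WeakBilin.locallyConvexSpace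

theorem WeakDual.exists_separation_prod {C : Set (WeakDual ℝ E × ℝ)} (hconv : Convex ℝ C)
    (hclosed : IsClosed C) {p : WeakDual ℝ E × ℝ} (hp : p ∉ C) :
    ∃ (y : E) (k d : ℝ), (∀ q ∈ C, q.1 y + k * q.2 < d) ∧ d < p.1 y + k * p.2 := by
  obtain ⟨f, d, hC, hpf⟩ := geometric_hahn_banach_closed_point hconv hclosed hp
  obtain ⟨y, hy⟩ := LinearMap.dualEmbedding_surjective (topDualPairing ℝ E)
    (f.comp (ContinuousLinearMap.inl ℝ _ ℝ))
  have hf : ∀ q : WeakDual ℝ E × ℝ, f q = q.1 y + f (0, 1) * q.2 := fun ⟨w, s⟩ => by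
    have hw : f (w, 0) = w y := (DFunLike.congr_fun hy w).symm
    calc f (w, s) = f (w, 0) + s • f (0, 1) := by rw [← map_smul, ← map_add]; simp
      _ = w y + f (0, 1) * s := by rw [hw, smul_eq_mul, mul_comm]
  exact ⟨y, f (0, 1), d, fun q hq => hf q ▸ hC q hq, hf p ▸ hpf⟩

end WeakDual

section Conjugate

variable {Y : Type*} [NormedAddCommGroup Y] [NormedSpace ℝ Y] {g : WeakDual ℝ Y → EReal}

theorem conjDual_le_coe_iff {y : Y} {K : ℝ} :
    conjDual g y ≤ K ↔ ∀ (w : WeakDual ℝ Y) (s : ℝ), g w ≤ s → w y - s ≤ K := by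
  simp only [conjDual, iSup_le_iff]
  refine forall_congr' fun w => ?_
  induction g w using EReal.rec with
  | bot => simpa using ⟨w y - K - 1, by linarith⟩
  | top => simp
  | coe G =>
    refine ⟨fun h s hs => ?_, fun h => ?_⟩
    · linarith [EReal.coe_le_coe_iff.1 hs, EReal.coe_le_coe_iff.1 h]
    · exact_mod_cast h G le_rfl

theorem conjDual_ne_top_iff {y : Y} : conjDual g y ≠ ⊤ ↔ ∃ K : ℝ, conjDual g y ≤ K :=
  ⟨fun h => ⟨_, EReal.le_coe_toReal h⟩, fun ⟨K, hK⟩ => ne_top_of_le_ne_top (EReal.coe_ne_top K) hK⟩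

theorem convex_dom_conjDual : Convex ℝ {y : Y | conjDual g y ≠ ⊤} := by
  intro y hy z hz a b ha hb hab
  obtain ⟨K₁, hK₁⟩ := conjDual_ne_top_iff.1 hy
  obtain ⟨K₂, hK₂⟩ := conjDual_ne_top_iff.1 hz
  refine conjDual_ne_top_iff.2 ⟨a * K₁ + b * K₂, conjDual_le_coe_iff.2 fun w s hs => ?_⟩
  have h₁ := mul_le_mul_of_nonneg_left (conjDual_le_coe_iff.1 hK₁ w s hs) ha
  have h₂ := mul_le_mul_of_nonneg_left (conjDual_le_coe_iff.1 hK₂ w s hs) hb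
  have hw : w (a • y + b • z) - s = a * (w y - s) + b * (w z - s) := by
    rw [map_add, map_smul, map_smul, smul_eq_mul, smul_eq_mul]
    linear_combination s * hab
  linarith

end Conjugate

section ClosedConvex

variable {Y : Type*} [NormedAddCommGroup Y] [NormedSpace ℝ Y] {g : WeakDual ℝ Y → EReal}
  {u₀ : WeakDual ℝ Y} {G : ℝ}

theorem exists_separation_epigraph (hclosed : IsClosed (epigraph g))
    (hconv : Convex ℝ (epigraph g)) (hu₀ : g u₀ ≠ ⊤) {v : WeakDual ℝ Y} {c : ℝ}
    (h : (c : EReal) < g v) :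
    ∃ (y : Y) (a d : ℝ), 0 ≤ a ∧ (∀ w (s : ℝ), g w ≤ s → w y - a * s < d) ∧ d < v y - a * c := by
  obtain ⟨y, k, d, hsep, hv⟩ :=
    WeakDual.exists_separation_prod hconv hclosed (p := (v, c)) h.not_ge
  -- `(u₀, s)` lies in the epigraph for every large `s`
  have hk : k ≤ 0 := by
    by_contra! hk
    obtain ⟨s, hs, hds⟩ := exists_pos_lt_mul hk (d - u₀ y)
    have := hsep (u₀, max s (g u₀).toReal)
      ((EReal.le_coe_toReal hu₀).trans (EReal.coe_le_coe_iff.2 (le_max_right _ _)))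
    nlinarith [le_max_left s (g u₀).toReal]
  exact ⟨y, -k, d, by linarith, fun w s hs => by linarith [hsep (w, s) hs], by linarith⟩

theorem exists_conjDual_le_of_separation {y : Y} {a d : ℝ} (ha : 0 < a)
    (hsep : ∀ w (s : ℝ), g w ≤ s → w y - a * s < d) {v : WeakDual ℝ Y} {c : ℝ}
    (hv : d < v y - a * c) :
    ∃ (y' : Y) (K : ℝ), conjDual g y' ≤ K ∧ c + K < v y' := by
  refine ⟨a⁻¹ • y, d / a, conjDual_le_coe_iff.2 fun w s hs => ?_, ?_⟩
  · rw [map_smul, smul_eq_mul, le_div_iff₀ ha]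
    have : (a⁻¹ * w y - s) * a = w y - a * s := by field_simp
    linarith [hsep w s hs]
  · rw [map_smul, smul_eq_mul, inv_mul_eq_div, add_div' _ _ _ ha.ne',
      div_lt_div_iff_of_pos_right ha]
    linarith

theorem exists_conjDual_le (hclosed : IsClosed (epigraph g)) (hconv : Convex ℝ (epigraph g))
    (hG : g u₀ = G) : ∃ (y : Y) (K : ℝ), conjDual g y ≤ K := by
  obtain ⟨y, a, d, -, hsep, hv⟩ := exists_separation_epigraph hclosed hconv
    (hG ▸ EReal.coe_ne_top G) (c := G - 1) (by rw [hG]; exact_mod_cast sub_one_lt G)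
  have ha : 0 < a := by linarith [hsep u₀ G hG.le]
  obtain ⟨y', K, hK, -⟩ := exists_conjDual_le_of_separation ha hsep hv
  exact ⟨y', K, hK⟩

theorem exists_conjDual_le_of_lt (hclosed : IsClosed (epigraph g))
    (hconv : Convex ℝ (epigraph g)) (hG : g u₀ = G) {v : WeakDual ℝ Y} {c : ℝ}
    (h : (c : EReal) < g v) : ∃ (y : Y) (K : ℝ), conjDual g y ≤ K ∧ c + K < v y := by
  obtain ⟨y, a, d, ha, hsep, hv⟩ :=
    exists_separation_epigraph hclosed hconv (hG ▸ EReal.coe_ne_top G) h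
  rcases ha.lt_or_eq with ha | rfl
  · exact exists_conjDual_le_of_separation ha hsep hv
  simp only [zero_mul, sub_zero] at hsep hv
  obtain ⟨y₁, K₁, hK₁⟩ := exists_conjDual_le hclosed hconv hG
  obtain ⟨t, ht, htv⟩ := exists_pos_lt_mul (sub_pos.2 hv) (c + K₁ - v y₁)
  refine ⟨y₁ + t • y, K₁ + t * d, conjDual_le_coe_iff.2 fun w s hs => ?_, ?_⟩
  · have := mul_le_mul_of_nonneg_left (hsep w s hs).le ht.le
    rw [map_add, map_smul, smul_eq_mul]
    linarith [conjDual_le_coe_iff.1 hK₁ w s hs]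
  · rw [map_add, map_smul, smul_eq_mul]
    linarith

theorem recFun_le_of_forall_conjDual_ne_top (hclosed : IsClosed (epigraph g))
    (hconv : Convex ℝ (epigraph g)) (hG : g u₀ = G) {u : WeakDual ℝ Y} {r : ℝ}
    (hr : ∀ y, conjDual g y ≠ ⊤ → u y ≤ r) : recFun g u₀ u ≤ r := by
  refine (recFun_le_coe_iff hG).2 fun α hα => ?_
  by_contra! h
  obtain ⟨y, K, hK, hlt⟩ := exists_conjDual_le_of_lt hclosed hconv hG h
  have := mul_le_mul_of_nonneg_left (hr y (conjDual_ne_top_iff.2 ⟨K, hK⟩)) hα.le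
  have : (u₀ + α • u) y = u₀ y + α * u y := rfl
  linarith [conjDual_le_coe_iff.1 hK u₀ G hG.le]

theorem le_recFun_of_conjDual_ne_top (hG : g u₀ = G) {y : Y} (hy : conjDual g y ≠ ⊤)
    (u : WeakDual ℝ Y) : ((u y : ℝ) : EReal) ≤ recFun g u₀ u := by
  obtain ⟨K, hK⟩ := conjDual_ne_top_iff.1 hy
  refine EReal.le_of_forall_lt_iff_le.1 fun r hr => EReal.coe_le_coe_iff.2 ?_
  have hbound : ∀ α : ℝ, 0 < α → α * (u y - r) ≤ K + G - u₀ y := fun α hα => by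
    have := conjDual_le_coe_iff.1 hK _ _ ((recFun_le_coe_iff hG).1 hr.le α hα)
    have : (u₀ + α • u) y = u₀ y + α * u y := rfl
    linarith
  by_contra! hlt
  obtain ⟨α, hα, hαr⟩ := exists_pos_lt_mul (sub_pos.2 hlt) (K + G - u₀ y)
  linarith [hbound α hα]

theorem recFun_eq_supportFun (hclosed : IsClosed (epigraph g)) (hconv : Convex ℝ (epigraph g))
    (hG : g u₀ = G) (u : WeakDual ℝ Y) :
    recFun g u₀ u = supportFun {y | conjDual g y ≠ ⊤} (WeakDual.toStrongDual u) := by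
  refine le_antisymm (EReal.le_of_forall_lt_iff_le.1 fun r hr => ?_)
    (iSup₂_le fun y hy => le_recFun_of_conjDual_ne_top hG hy u)
  refine recFun_le_of_forall_conjDual_ne_top hclosed hconv hG fun y hy => ?_
  exact EReal.coe_le_coe_iff.1 ((le_iSup₂ (f := fun y _ => ((u y : ℝ) : EReal)) y hy).trans hr.le)

end ClosedConvex

open Classical in
theorem coercive_iff_dense_domain_conjugate_general
    {Y : Type*} [NormedAddCommGroup Y] [NormedSpace ℝ Y]
    (g : WeakDual ℝ Y → EReal)
    -- g is closed (weak*-lsc) proper convex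
    (hlsc : LowerSemicontinuous g)
    (hcvx : ∀ x y : WeakDual ℝ Y, ∀ a b : ℝ, 0 ≤ a → 0 ≤ b → a + b = 1 →
      g (a • x + b • y) ≤ (a : EReal) * g x + (b : EReal) * g y)
    (hproper₁ : ∀ u, g u ≠ ⊥)
    (u₀ : WeakDual ℝ Y) (hu₀ : g u₀ ≠ ⊤) :
    (∀ u : WeakDual ℝ Y, recFun g u₀ u = if u = 0 then (0 : EReal) else ⊤) ↔
      Dense {y : Y | conjDual g y ≠ ⊤} := by
  obtain ⟨G, hG⟩ : ∃ G : ℝ, g u₀ = G := ⟨_, (EReal.coe_toReal hu₀ (hproper₁ u₀)).symm⟩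
  have hclosed := isClosed_epigraph hlsc
  have hconv := convex_epigraph hcvx
  have hrec := recFun_eq_supportFun hclosed hconv hG
  obtain ⟨y, K, hK⟩ := exists_conjDual_le hclosed hconv hG
  rw [convex_dom_conjDual.dense_iff_supportFun_eq_top ⟨y, conjDual_ne_top_iff.2 ⟨K, hK⟩⟩]
  refine ⟨fun h f hf => ?_, fun h u => ?_⟩
  · simpa [hrec, hf] using h (StrongDual.toWeakDual f)
  · split_ifs with hu
    · exact hu ▸ recFun_zero hG
    · exact (hrec u).trans (h _ (by simpa using hu))

open Classical in
/-- For a closed proper convex function `g` on the dual `U = Y*` of a Banach space `Y`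
(with its weak* topology), `g` is coercive (`g^∞ = δ_{{0}}`) if and only if `dom g*` is
dense in `Y`. -/
theorem coercive_iff_dense_domain_conjugate
    {Y : Type*} [NormedAddCommGroup Y] [NormedSpace ℝ Y] [CompleteSpace Y]
    (g : WeakDual ℝ Y → EReal)
    -- g is closed (weak*-lsc) proper convex
    (hlsc : LowerSemicontinuous g)
    (hcvx : ∀ x y : WeakDual ℝ Y, ∀ a b : ℝ, 0 ≤ a → 0 ≤ b → a + b = 1 →
      g (a • x + b • y) ≤ (a : EReal) * g x + (b : EReal) * g y)
    (hproper₁ : ∀ u, g u ≠ ⊥)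
    (u₀ : WeakDual ℝ Y) (hu₀ : g u₀ ≠ ⊤) :
    (∀ u : WeakDual ℝ Y, recFun g u₀ u = if u = 0 then (0 : EReal) else ⊤) ↔
      Dense {y : Y | conjDual g y ≠ ⊤} :=
  coercive_iff_dense_domain_conjugate_general g hlsc hcvx hproper₁ u₀ hu₀
end
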